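/- For every integer k ≥ 1 and every x ∈ [0,1], G_k(x) = 2√2 · ((k−1)!/Γ(k+3/2)) · (1−x)^{3/2} · Σ_{t=1}^{k} (Γ(k−t+3/2)/(k−t)!) · (2x−1)^{t−1}, where Γ is the Gamma function. -/

import Mathlib

open MeasureTheory

/-- `G_k(x) = ∫_{2x-1}^{1} t^{k-1} √(1 + t - 2x) dt` for `k ≥ 1` (and `G₀ ≡ 0`). -/
noncomputable def G : ℕ → ℝ → ℝ
  | 0, _ => 0
  | (k + 1), x => ∫ t in (2 * x - 1)..1, t ^ k * Real.sqrt (1 + t - 2 * x)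

/-!
With `y = 2x - 1` we have `G_{n+1}(x) = ∫_y^1 t^n √(t - y) dt`. Integrating the derivative of
`t^n (t - y)^{3/2}` over `[y, 1]` gives the recurrence
`(n + 3/2) G_{n+1} = n y G_n + (1 - y)^{3/2}`. Normalised by `Γ(k + 3/2)/(k - 1)!`, and using
`Γ(k + 5/2) = (k + 3/2) Γ(k + 3/2)`, it becomes the Horner recursion
`S_{k+1} = Γ(k + 3/2)/k! + y S_k` for the sum in the closed form, so the closed form follows by
induction on `k`.
-/

open Real Finset

theorem hasDerivAt_mul_sqrt_self (s : ℝ) : HasDerivAt (fun u => u * √u) (3 / 2 * √s) s := by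
  rcases lt_trichotomy s 0 with hs | rfl | hs
  · have hzero : (fun u => u * √u) =ᶠ[nhds s] fun _ => 0 := by
      filter_upwards [Iio_mem_nhds hs] with u hu
      rw [sqrt_eq_zero_of_nonpos hu.le, mul_zero]
    rw [sqrt_eq_zero_of_nonpos hs.le, mul_zero]
    exact (hasDerivAt_const s 0).congr_of_eventuallyEq hzero
  · rw [sqrt_zero, mul_zero, hasDerivAt_iff_tendsto_slope]
    refine (continuous_sqrt.tendsto' 0 0 sqrt_zero).mono_left nhdsWithin_le_nhds |>.congr' ?_
    filter_upwards [self_mem_nhdsWithin] with u (hu : u ≠ 0)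
    simp [slope, hu]
  · refine ((hasDerivAt_id' s).mul (hasDerivAt_sqrt hs.ne')).congr_deriv ?_
    have := sqrt_pos.2 hs
    field_simp
    linarith [mul_self_sqrt hs.le]

theorem integral_mul_sqrt_sub_of_hasDerivAt {f f' : ℝ → ℝ} (hf : ∀ t, HasDerivAt f (f' t) t)
    (hf' : Continuous f') (a b : ℝ) :
    ∫ t in a..b, (f' t * (t - a) + 3 / 2 * f t) * √(t - a) = f b * ((b - a) * √(b - a)) := by
  have hF (t : ℝ) : HasDerivAt (fun t => f t * ((t - a) * √(t - a)))
      ((f' t * (t - a) + 3 / 2 * f t) * √(t - a)) t :=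
    ((hf t).mul (hasDerivAt_mul_sqrt_self (t - a)).comp_sub_const).congr_deriv (by ring)
  have hcont : Continuous f := continuous_iff_continuousAt.2 fun t => (hf t).continuousAt
  rw [intervalIntegral.integral_eq_sub_of_hasDerivAt (fun t _ => hF t)
    ((by fun_prop : Continuous _).intervalIntegrable _ _)]
  simp

theorem G_succ_eq_integral (n : ℕ) (x : ℝ) :
    G (n + 1) x = ∫ t in (2 * x - 1)..1, t ^ n * √(t - (2 * x - 1)) := by
  simp only [G, sub_sub_eq_add_sub, add_comm]

theorem G_recurrence (n : ℕ) (x : ℝ) :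
    (n + 3 / 2) * G (n + 1) x = n * (2 * x - 1) * G n x + (2 - 2 * x) * √(2 - 2 * x) := by
  set y := 2 * x - 1
  have hparts := integral_mul_sqrt_sub_of_hasDerivAt (fun t => hasDerivAt_pow n t)
    (by fun_prop) y 1
  have hsplit (t : ℝ) : (n * t ^ (n - 1) * (t - y) + 3 / 2 * t ^ n) * √(t - y)
      = (n + 3 / 2) * (t ^ n * √(t - y)) - n * y * (t ^ (n - 1) * √(t - y)) := by
    rcases n with _ | m
    · simp
    · simp only [Nat.add_sub_cancel, pow_succ]
      ring
  have hlower : n * ∫ t in y..1, t ^ (n - 1) * √(t - y) = n * G n x := by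
    rcases n with _ | m
    · simp
    · rw [G_succ_eq_integral]; rfl
  simp_rw [hsplit] at hparts
  rw [intervalIntegral.integral_sub ((by fun_prop : Continuous _).intervalIntegrable _ _)
      ((by fun_prop : Continuous _).intervalIntegrable _ _),
    intervalIntegral.integral_const_mul, intervalIntegral.integral_const_mul, ← G_succ_eq_integral,
    one_pow, one_mul] at hparts
  rw [show 2 - 2 * x = 1 - y by ring]
  linear_combination hparts + y * hlower

noncomputable def gammaCoeff (j : ℕ) : ℝ := Gamma (j + 3 / 2) / j.factorial

noncomputable def gammaHorner (k : ℕ) (y : ℝ) : ℝ := ∑ j ∈ range k, gammaCoeff (k - 1 - j) * y ^ j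

theorem gammaHorner_succ (k : ℕ) (y : ℝ) :
    gammaHorner (k + 1) y = gammaCoeff k + y * gammaHorner k y := by
  rw [gammaHorner, sum_range_succ', gammaHorner, mul_sum, add_comm]
  congr 1
  · simp
  · refine sum_congr rfl fun j _ => ?_
    rw [show k + 1 - 1 - (j + 1) = k - 1 - j by omega, pow_succ]
    ring

theorem gammaHorner_one (y : ℝ) : gammaHorner 1 y = Gamma (3 / 2) := by
  simp [gammaHorner, gammaCoeff]

theorem sum_Icc_eq_gammaHorner (k : ℕ) (y : ℝ) :
    ∑ t ∈ Icc 1 k, Gamma ((k : ℝ) - t + 3 / 2) / (k - t).factorial * y ^ (t - 1)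
      = gammaHorner k y := by
  rw [← Ico_add_one_right_eq_Icc, sum_Ico_eq_sum_range, Nat.add_sub_cancel]
  refine sum_congr rfl fun j hj => ?_
  have hjk : 1 + j ≤ k := by simp at hj; omega
  rw [gammaCoeff, show k - 1 - j = k - (1 + j) by omega, Nat.cast_sub hjk, Nat.add_sub_cancel_left]

theorem Gamma_mul_G_eq (k : ℕ) (hk : 1 ≤ k) (x : ℝ) :
    Gamma (k + 3 / 2) * G k x
      = (k - 1).factorial * ((2 - 2 * x) * √(2 - 2 * x)) * gammaHorner k (2 * x - 1) := by
  induction k, hk using Nat.le_induction with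
  | base =>
    have hrec := G_recurrence 0 x
    have hΓ : Gamma ((1 : ℕ) + 3 / 2) = 3 / 2 * Gamma (3 / 2) := by
      rw [show ((1 : ℕ) : ℝ) + 3 / 2 = 3 / 2 + 1 by norm_num, Gamma_add_one (by norm_num)]
    rw [hΓ, gammaHorner_one, Nat.sub_self, Nat.factorial_zero, Nat.cast_one, one_mul]
    linear_combination Gamma (3 / 2) * hrec
  | succ k hk ih =>
    have hrec := G_recurrence k x
    set R := (2 - 2 * x) * √(2 - 2 * x)
    have hΓ : Gamma ((k + 1 : ℕ) + 3 / 2) = (k + 3 / 2) * Gamma (k + 3 / 2) := by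
      rw [Nat.cast_add_one, add_right_comm, Gamma_add_one (by positivity)]
    have hfact : (k.factorial : ℝ) = k * (k - 1).factorial := by
      exact_mod_cast (Nat.mul_factorial_pred (by omega)).symm
    have hcancel : (k.factorial : ℝ) * R * (Gamma (k + 3 / 2) / k.factorial)
        = Gamma (k + 3 / 2) * R := by
      field_simp
    rw [hΓ, gammaHorner_succ, gammaCoeff, Nat.add_sub_cancel, mul_add, hcancel, hfact]
    linear_combination Gamma (k + 3 / 2) * hrec + (2 * x - 1) * k * ih

/-- The closed form
`G_k(x) = 2√2 ((k-1)!/Γ(k+3/2)) (1-x)^{3/2} Σ_{t=1}^{k} (Γ(k-t+3/2)/(k-t)!) (2x-1)^{t-1}`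
for all integers `k ≥ 1` and `x ∈ [0,1]`. -/
theorem G_closed_form (k : ℕ) (hk : 1 ≤ k) (x : ℝ) (hx : x ∈ Set.Icc (0 : ℝ) 1) :
    G k x = 2 * Real.sqrt 2 * ((Nat.factorial (k - 1) : ℝ) / Real.Gamma ((k : ℝ) + 3 / 2))
        * (1 - x) ^ ((3 : ℝ) / 2)
        * ∑ t ∈ Finset.Icc 1 k,
            Real.Gamma ((k : ℝ) - (t : ℝ) + 3 / 2) / (Nat.factorial (k - t) : ℝ)
              * (2 * x - 1) ^ (t - 1) := by
  have hΓ : Gamma (k + 3 / 2) ≠ 0 := (Gamma_pos_of_pos (by positivity)).ne'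
  have hR : (2 - 2 * x) * √(2 - 2 * x) = 2 * √2 * (1 - x) ^ ((3 : ℝ) / 2) := by
    rw [show (3 : ℝ) / 2 = 1 + 1 / 2 by norm_num, rpow_one_add' (by linarith [hx.2]) (by norm_num),
      ← sqrt_eq_rpow, show 2 - 2 * x = 2 * (1 - x) by ring, sqrt_mul zero_le_two]
    ring
  apply mul_left_cancel₀ hΓ
  rw [Gamma_mul_G_eq k hk x, hR, sum_Icc_eq_gammaHorner]
  field_simp
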